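/- Let n ≥ 1, suppose f : ℝ^n → ℝ, V, W satisfy Assumption (A1) with constants λ₁, λ₂, λ₃, λ₄, c₁, c₂, let v : [0,∞) → ℝ be continuously differentiable with sup_{t≥0}(|v(t)| + |v'(t)|) ≤ M for some M > 0, fix θ ∈ (0,1) and define R₀ = { r ≥ 1 : 1/r + 1/(2 r^{2n−1}) ≤ θ λ₃ / λ₂ }. Fix an initial value x⁰ ∈ ℝ^n and T > 0, and for each r ∈ R₀ let x^r denote a solution of the noise-free tracking differentiator with gain r and x^r(0) = x⁰. Then the first component converges to the input signal uniformly on [T,∞) as r → ∞: for every ε > 0 there exists r* ≥ 1 such that for all r ∈ R₀ with r ≥ r*, sup_{t ≥ T} |x₁^r(t) − v(t)| ≤ ε. -/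

import Mathlib

open scoped BigOperators

/-- Assumption (A1) of the paper (0-based indices; see the paper). -/
structure AssumptionA1 (n : ℕ) (f : EuclideanSpace ℝ (Fin n) → ℝ)
    (V W : EuclideanSpace ℝ (Fin n) → ℝ)
    (l1 l2 l3 l4 c1 c2 : ℝ) : Prop where
  l1_pos : 0 < l1
  l2_pos : 0 < l2
  l3_pos : 0 < l3
  l4_pos : 0 < l4
  c1_pos : 0 < c1
  c2_pos : 0 < c2
  f_locallyLipschitz : LocallyLipschitz f
  f_zero : f 0 = 0
  V_contDiff : ContDiff ℝ 2 V
  W_continuous : Continuous W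
  V_lower : ∀ z : EuclideanSpace ℝ (Fin n), l1 * ‖z‖ ^ 2 ≤ V z
  V_upper : ∀ z : EuclideanSpace ℝ (Fin n), V z ≤ l2 * ‖z‖ ^ 2
  W_lower : ∀ z : EuclideanSpace ℝ (Fin n), l3 * ‖z‖ ^ 2 ≤ W z
  W_upper : ∀ z : EuclideanSpace ℝ (Fin n), W z ≤ l4 * ‖z‖ ^ 2
  lyapunov : ∀ z : EuclideanSpace ℝ (Fin n),
    (∑ i : Fin n, fderiv ℝ V z (EuclideanSpace.single i 1) *
      (if h : (i : ℕ) + 1 < n then z ⟨(i : ℕ) + 1, h⟩ else f z)) ≤ -W z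
  grad_bound : ∀ z : EuclideanSpace ℝ (Fin n), ∀ j : Fin n,
    ((j : ℕ) = 0 ∨ (j : ℕ) = n - 1) →
    |fderiv ℝ V z (EuclideanSpace.single j 1)| ≤ c1 * ‖z‖
  hess_bound : ∀ z : EuclideanSpace ℝ (Fin n), ∀ j : Fin n,
    ((j : ℕ) = 0 ∨ (j : ℕ) = n - 1) →
    |fderiv ℝ (fun w => fderiv ℝ V w (EuclideanSpace.single j 1)) z
      (EuclideanSpace.single j 1)| ≤ c2

/-- Right-hand side of the noise-free tracking differentiator with gain `r` and
input `v`: `xᵢ' = x_{i+1}` (`i = 1,…,n−1`),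
`x_n' = rⁿ f(x₁ − v(t), x₂/r, …, x_n/r^{n−1})` (0-based indices). -/
noncomputable def tdField (n : ℕ) (f : EuclideanSpace ℝ (Fin n) → ℝ) (v : ℝ → ℝ)
    (r t : ℝ) (w : EuclideanSpace ℝ (Fin n)) : EuclideanSpace ℝ (Fin n) :=
  (WithLp.equiv 2 (Fin n → ℝ)).symm fun i : Fin n =>
    if h : (i : ℕ) + 1 < n then w ⟨(i : ℕ) + 1, h⟩
    else r ^ n * f ((WithLp.equiv 2 (Fin n → ℝ)).symm fun j : Fin n =>
      (w j - if (j : ℕ) = 0 then v t else 0) / r ^ (j : ℕ))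

lemma euclid_sum_apply' {n : ℕ} (s : Finset (Fin n)) (g : Fin n → EuclideanSpace ℝ (Fin n)) (i : Fin n) :
    (∑ j ∈ s, g j) i = ∑ j ∈ s, g j i :=
  map_sum (EuclideanSpace.proj (𝕜 := ℝ) i) g s

lemma euclid_decomp' {n : ℕ} (w : EuclideanSpace ℝ (Fin n)) :
    w = ∑ j, (w j) • EuclideanSpace.single j (1:ℝ) := by
  ext i
  rw [euclid_sum_apply']
  simp [EuclideanSpace.single_apply]

lemma clm_decomp' {n : ℕ} (L : EuclideanSpace ℝ (Fin n) →L[ℝ] ℝ) (w : EuclideanSpace ℝ (Fin n)) :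
    L w = ∑ j, L (EuclideanSpace.single j 1) * w j := by
  conv_lhs => rw [euclid_decomp' w]
  rw [map_sum]
  simp [mul_comm]

lemma euclid_norm_le' {n : ℕ} (y z : EuclideanSpace ℝ (Fin n)) (h : ∀ i, |y i| ≤ |z i|) :
    ‖y‖ ≤ ‖z‖ := by
  rw [EuclideanSpace.norm_eq, EuclideanSpace.norm_eq]
  apply Real.sqrt_le_sqrt
  apply Finset.sum_le_sum
  intro i _
  have := h i
  simp only [Real.norm_eq_abs]
  nlinarith [abs_nonneg (y i), abs_nonneg (z i), sq_abs (y i), sq_abs (z i)]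

lemma euclid_coord_le' {n : ℕ} (z : EuclideanSpace ℝ (Fin n)) (i : Fin n) : |z i| ≤ ‖z‖ := by
  rw [EuclideanSpace.norm_eq]
  have h1 : |z i| = Real.sqrt (‖z i‖^2) := by
    rw [Real.sqrt_sq_eq_abs]; simp
  rw [h1]
  apply Real.sqrt_le_sqrt
  exact Finset.single_le_sum (f := fun j => ‖z j‖^2) (fun j _ => by positivity) (Finset.mem_univ i)

noncomputable def etaFun (n : ℕ) (v : ℝ → ℝ) (r : ℝ) (x : ℝ → EuclideanSpace ℝ (Fin n))
    (s : ℝ) : EuclideanSpace ℝ (Fin n) :=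
  (WithLp.equiv 2 (Fin n → ℝ)).symm fun j : Fin n =>
    (x s j - if (j : ℕ) = 0 then v s else 0) / r ^ (j : ℕ)

noncomputable def etaDer (n : ℕ) (f : EuclideanSpace ℝ (Fin n) → ℝ) (v : ℝ → ℝ) (r : ℝ)
    (x : ℝ → EuclideanSpace ℝ (Fin n)) (s : ℝ) : EuclideanSpace ℝ (Fin n) :=
  (WithLp.equiv 2 (Fin n → ℝ)).symm fun j : Fin n =>
    r * (if h : (j : ℕ) + 1 < n then etaFun n v r x s ⟨(j : ℕ) + 1, h⟩ else f (etaFun n v r x s))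
      - (if (j : ℕ) = 0 then deriv v s else 0)

lemma etaFun_apply (n : ℕ) (v : ℝ → ℝ) (r : ℝ) (x : ℝ → EuclideanSpace ℝ (Fin n)) (s : ℝ) (j : Fin n) :
    etaFun n v r x s j = (x s j - if (j : ℕ) = 0 then v s else 0) / r ^ (j : ℕ) := rfl

lemma etaDer_apply (n : ℕ) (f : EuclideanSpace ℝ (Fin n) → ℝ) (v : ℝ → ℝ) (r : ℝ)
    (x : ℝ → EuclideanSpace ℝ (Fin n)) (s : ℝ) (j : Fin n) :
    etaDer n f v r x s j =
      r * (if h : (j : ℕ) + 1 < n then etaFun n v r x s ⟨(j : ℕ) + 1, h⟩ else f (etaFun n v r x s))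
        - (if (j : ℕ) = 0 then deriv v s else 0) := rfl

lemma tdField_apply (n : ℕ) (f : EuclideanSpace ℝ (Fin n) → ℝ) (v : ℝ → ℝ) (r s : ℝ)
    (x : ℝ → EuclideanSpace ℝ (Fin n)) (j : Fin n) :
    tdField n f v r s (x s) j =
      if h : (j : ℕ) + 1 < n then x s ⟨(j : ℕ) + 1, h⟩ else r ^ n * f (etaFun n v r x s) := rfl

lemma etaFun_hasDerivAt (n : ℕ) (f : EuclideanSpace ℝ (Fin n) → ℝ) (v : ℝ → ℝ)
    (hv : ContDiff ℝ 1 v) (r : ℝ) (hr : 1 ≤ r) (x : ℝ → EuclideanSpace ℝ (Fin n))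
    (hxd : ∀ t : ℝ, 0 ≤ t → HasDerivAt x (tdField n f v r t (x t)) t)
    (s : ℝ) (hs : 0 ≤ s) :
    HasDerivAt (etaFun n v r x) (etaDer n f v r x s) s := by
  have hr0 : (0:ℝ) < r := lt_of_lt_of_le one_pos hr
  have hv1 : ∀ τ : ℝ, HasDerivAt v (deriv v τ) τ := fun τ =>
    ((hv.differentiable one_ne_zero) τ).hasDerivAt
  -- components of x
  have hxc : ∀ j : Fin n, HasDerivAt (fun τ => x τ j) (tdField n f v r s (x s) j) s := by
    intro j
    have h1 : HasDerivAt (fun τ => (PiLp.continuousLinearEquiv 2 ℝ (fun _ : Fin n => ℝ)) (x τ))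
        ((PiLp.continuousLinearEquiv 2 ℝ (fun _ : Fin n => ℝ)) (tdField n f v r s (x s))) s :=
      ((PiLp.continuousLinearEquiv 2 ℝ (fun _ : Fin n => ℝ)).toContinuousLinearMap.hasFDerivAt).comp_hasDerivAt
        s (hxd s hs)
    exact hasDerivAt_pi.1 h1 j
  -- components of eta
  have hcomp : ∀ j : Fin n, HasDerivAt (fun τ => (x τ j - if (j : ℕ) = 0 then v τ else 0) / r ^ (j : ℕ))
      (etaDer n f v r x s j) s := by
    intro j
    have hder : HasDerivAt (fun τ => (x τ j - if (j : ℕ) = 0 then v τ else 0) / r ^ (j : ℕ))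
        ((tdField n f v r s (x s) j - (if (j : ℕ) = 0 then deriv v s else 0)) / r ^ (j : ℕ)) s := by
      by_cases hj : (j : ℕ) = 0
      · simp only [if_pos hj]
        exact ((hxc j).sub (hv1 s)).div_const (r ^ (j : ℕ))
      · simp only [if_neg hj, sub_zero]
        exact (hxc j).div_const (r ^ (j : ℕ))
    convert hder using 1
    rw [etaDer_apply, tdField_apply]
    have hrj : r ^ (j : ℕ) ≠ 0 := by positivity
    by_cases h : (j : ℕ) + 1 < n
    · rw [dif_pos h, dif_pos h, etaFun_apply]
      have hne : ¬(((⟨(j : ℕ) + 1, h⟩ : Fin n) : ℕ) = 0) := by simp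
      rw [if_neg hne, sub_zero]
      by_cases hj : (j : ℕ) = 0
      · rw [if_pos hj]
        have e1 : r ^ (((⟨(j : ℕ) + 1, h⟩ : Fin n) : ℕ)) = r := by
          show r ^ ((j : ℕ) + 1) = r
          rw [hj, zero_add, pow_one]
        have e2 : r ^ (j : ℕ) = 1 := by rw [hj, pow_zero]
        rw [e1, e2, div_one]
        field_simp
      · rw [if_neg hj]
        simp only [sub_zero]
        have e1 : r ^ (((⟨(j : ℕ) + 1, h⟩ : Fin n) : ℕ)) = r ^ (j : ℕ) * r := by
          show r ^ ((j : ℕ) + 1) = r ^ (j : ℕ) * r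
          rw [pow_succ]
        rw [e1]
        field_simp
    · rw [dif_neg h, dif_neg h]
      have hjn : (j : ℕ) + 1 = n := le_antisymm j.isLt (not_lt.1 h)
      by_cases hj : (j : ℕ) = 0
      · rw [if_pos hj]
        have e2 : r ^ (j : ℕ) = 1 := by rw [hj, pow_zero]
        have e3 : r ^ n = r := by
          have hn1 : n = 1 := by omega
          rw [hn1, pow_one]
        rw [e2, e3, div_one]
      · rw [if_neg hj]
        simp only [sub_zero]
        have hpw : r ^ n = r * r ^ (j : ℕ) := by
          have := pow_succ' r (j : ℕ)
          rw [hjn] at this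
          exact this
        rw [hpw]
        field_simp
  -- assemble
  have hpi : HasDerivAt (fun τ => fun j : Fin n => (x τ j - if (j : ℕ) = 0 then v τ else 0) / r ^ (j : ℕ))
      (fun j : Fin n => etaDer n f v r x s j) s := hasDerivAt_pi.2 hcomp
  exact ((PiLp.continuousLinearEquiv 2 ℝ (fun _ : Fin n => ℝ)).symm.toContinuousLinearMap.hasFDerivAt).comp_hasDerivAt
    s hpi

lemma lyap_deriv_bound (n : ℕ) (hn : 1 ≤ n)
    (f V W : EuclideanSpace ℝ (Fin n) → ℝ) (l1 l2 l3 l4 c1 c2 : ℝ)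
    (hA1 : AssumptionA1 n f V W l1 l2 l3 l4 c1 c2)
    (v : ℝ → ℝ) (M : ℝ) (hM : 0 < M)
    (hvM : ∀ t : ℝ, 0 ≤ t → |v t| + |deriv v t| ≤ M)
    (r : ℝ) (hr : 1 ≤ r) (x : ℝ → EuclideanSpace ℝ (Fin n))
    (s : ℝ) (hs : 0 ≤ s) :
    (fderiv ℝ V (etaFun n v r x s)) (etaDer n f v r x s) ≤
      -((r * l3 / l2) / 2) * V (etaFun n v r x s) + c1 ^ 2 * M ^ 2 / ((r * l3 / l2) * l1) := by
  have hr0 : (0:ℝ) < r := lt_of_lt_of_le one_pos hr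
  have hl1 := hA1.l1_pos
  have hl2 := hA1.l2_pos
  have hl3 := hA1.l3_pos
  set z := etaFun n v r x s with hz
  set L := fderiv ℝ V z with hL
  set a := r * l3 / l2 with ha
  have ha0 : 0 < a := by positivity
  -- decompose L applied to etaDer
  have h1 : L (etaDer n f v r x s) = ∑ j : Fin n, L (EuclideanSpace.single j 1) * etaDer n f v r x s j :=
    clm_decomp' L _
  have h2 : ∑ j : Fin n, L (EuclideanSpace.single j 1) * etaDer n f v r x s j
      = r * (∑ j : Fin n, L (EuclideanSpace.single j 1) *
          (if h : (j : ℕ) + 1 < n then z ⟨(j : ℕ) + 1, h⟩ else f z))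
        - deriv v s * L (EuclideanSpace.single (⟨0, hn⟩ : Fin n) 1) := by
    have step : ∀ j : Fin n, L (EuclideanSpace.single j 1) * etaDer n f v r x s j
        = r * (L (EuclideanSpace.single j 1) *
            (if h : (j : ℕ) + 1 < n then z ⟨(j : ℕ) + 1, h⟩ else f z))
          - (if j = (⟨0, hn⟩ : Fin n) then deriv v s * L (EuclideanSpace.single j 1) else 0) := by
      intro j
      rw [etaDer_apply, ← hz]
      by_cases hj : (j : ℕ) = 0
      · have hj' : j = (⟨0, hn⟩ : Fin n) := Fin.ext hj
        rw [if_pos hj, if_pos hj']; ring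
      · have hj' : ¬ j = (⟨0, hn⟩ : Fin n) := fun hh => hj (by rw [hh])
        rw [if_neg hj, if_neg hj']; ring
    rw [Finset.sum_congr rfl (fun j _ => step j), Finset.sum_sub_distrib, ← Finset.mul_sum,
      Finset.sum_ite_eq' Finset.univ (⟨0, hn⟩ : Fin n)
        (fun j => deriv v s * L (EuclideanSpace.single j 1))]
    simp
  have hS : (∑ j : Fin n, L (EuclideanSpace.single j 1) *
      (if h : (j : ℕ) + 1 < n then z ⟨(j : ℕ) + 1, h⟩ else f z)) ≤ -W z := hA1.lyapunov z
  have hL0 : |L (EuclideanSpace.single (⟨0, hn⟩ : Fin n) 1)| ≤ c1 * ‖z‖ :=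
    hA1.grad_bound z ⟨0, hn⟩ (Or.inl rfl)
  have hdv : |deriv v s| ≤ M := by
    have h := hvM s hs
    have := abs_nonneg (v s)
    linarith
  have hW : l3 * ‖z‖ ^ 2 ≤ W z := hA1.W_lower z
  have hVu : V z ≤ l2 * ‖z‖ ^ 2 := hA1.V_upper z
  have hVl : l1 * ‖z‖ ^ 2 ≤ V z := hA1.V_lower z
  have hs0 : (0:ℝ) ≤ ‖z‖ := norm_nonneg z
  -- bound the two pieces
  have hterm1 : r * (∑ j : Fin n, L (EuclideanSpace.single j 1) *
      (if h : (j : ℕ) + 1 < n then z ⟨(j : ℕ) + 1, h⟩ else f z)) ≤ r * (-(l3 * ‖z‖ ^ 2)) := by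
    apply mul_le_mul_of_nonneg_left _ hr0.le
    calc (∑ j : Fin n, L (EuclideanSpace.single j 1) *
        (if h : (j : ℕ) + 1 < n then z ⟨(j : ℕ) + 1, h⟩ else f z)) ≤ -W z := hS
    _ ≤ -(l3 * ‖z‖ ^ 2) := by linarith
  have hterm2 : -(deriv v s * L (EuclideanSpace.single (⟨0, hn⟩ : Fin n) 1)) ≤ M * (c1 * ‖z‖) := by
    calc -(deriv v s * L (EuclideanSpace.single (⟨0, hn⟩ : Fin n) 1))
        ≤ |deriv v s * L (EuclideanSpace.single (⟨0, hn⟩ : Fin n) 1)| := neg_le_abs _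
      _ = |deriv v s| * |L (EuclideanSpace.single (⟨0, hn⟩ : Fin n) 1)| := abs_mul _ _
      _ ≤ M * (c1 * ‖z‖) := by
          apply mul_le_mul hdv hL0 (abs_nonneg _) hM.le
  -- combine
  rw [h1, h2]
  have hag : a * V z ≤ r * l3 * ‖z‖ ^ 2 := by
    have h3 : a * V z ≤ a * (l2 * ‖z‖ ^ 2) := mul_le_mul_of_nonneg_left hVu ha0.le
    have h4 : a * (l2 * ‖z‖ ^ 2) = r * l3 * ‖z‖ ^ 2 := by
      rw [ha]; field_simp
    linarith
  have hal1 : 0 < a * l1 := mul_pos ha0 hl1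
  have hCd : c1 ^ 2 * M ^ 2 / (a * l1) * (a * l1) = c1 ^ 2 * M ^ 2 :=
    div_mul_cancel₀ _ (ne_of_gt hal1)
  have hamg : M * (c1 * ‖z‖) ≤ a * l1 / 4 * ‖z‖ ^ 2 + c1 ^ 2 * M ^ 2 / (a * l1) := by
    nlinarith [sq_nonneg (a * l1 * ‖z‖ - 2 * c1 * M), hal1, sq_nonneg ‖z‖]
  have h4 : a / 4 * (l1 * ‖z‖ ^ 2) ≤ a / 4 * V z := mul_le_mul_of_nonneg_left hVl (by positivity)
  have h5 : 0 ≤ a * V z := mul_nonneg ha0.le (le_trans (by positivity) hVl)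
  linarith

lemma key_bound (n : ℕ) (hn : 1 ≤ n)
    (f V W : EuclideanSpace ℝ (Fin n) → ℝ) (l1 l2 l3 l4 c1 c2 : ℝ)
    (hA1 : AssumptionA1 n f V W l1 l2 l3 l4 c1 c2)
    (v : ℝ → ℝ) (hv : ContDiff ℝ 1 v) (M : ℝ) (hM : 0 < M)
    (hvM : ∀ t : ℝ, 0 ≤ t → |v t| + |deriv v t| ≤ M)
    (x0 : EuclideanSpace ℝ (Fin n)) (r : ℝ) (hr : 1 ≤ r)
    (x : ℝ → EuclideanSpace ℝ (Fin n)) (hx0 : x 0 = x0)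
    (hxd : ∀ t : ℝ, 0 ≤ t → HasDerivAt x (tdField n f v r t (x t)) t)
    (t : ℝ) (ht : 0 ≤ t) :
    V (etaFun n v r x t) ≤
      2 * (c1 ^ 2 * M ^ 2 / ((r * l3 / l2) * l1)) / (r * l3 / l2)
        + l2 * (‖x0‖ + M) ^ 2 / Real.exp ((r * l3 / l2) / 2 * t) := by
  have hr0 : (0:ℝ) < r := lt_of_lt_of_le one_pos hr
  have hl1 := hA1.l1_pos
  have hl2 := hA1.l2_pos
  have hl3 := hA1.l3_pos
  set a := r * l3 / l2 with ha
  have ha0 : 0 < a := by positivity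
  set Cd := c1 ^ 2 * M ^ 2 / (a * l1) with hCd
  have hCd0 : 0 ≤ Cd := by positivity
  set K := 2 * Cd / a with hK
  have hK0 : 0 ≤ K := by positivity
  set G0 := l2 * (‖x0‖ + M) ^ 2 with hG0
  have hG00 : 0 ≤ G0 := by positivity
  set g := fun τ : ℝ => V (etaFun n v r x τ) with hg
  -- derivative of g
  have hgd : ∀ s : ℝ, 0 ≤ s →
      HasDerivAt g ((fderiv ℝ V (etaFun n v r x s)) (etaDer n f v r x s)) s := by
    intro s hs
    exact ((hA1.V_contDiff.differentiable (by norm_num) (etaFun n v r x s)).hasFDerivAt).comp_hasDerivAt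
      s (etaFun_hasDerivAt n f v hv r hr x hxd s hs)
  -- the auxiliary function φ
  set φ := fun τ : ℝ => (g τ - K) * Real.exp (a / 2 * τ) with hφ
  have hφd : ∀ s : ℝ, 0 ≤ s →
      HasDerivAt φ ((fderiv ℝ V (etaFun n v r x s)) (etaDer n f v r x s) * Real.exp (a / 2 * s)
        + (g s - K) * (Real.exp (a / 2 * s) * (a / 2))) s := by
    intro s hs
    have he : HasDerivAt (fun τ : ℝ => Real.exp (a / 2 * τ)) (Real.exp (a / 2 * s) * (a / 2)) s := by
      have h1 : HasDerivAt (fun τ : ℝ => a / 2 * τ) (a / 2) s := by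
        simpa using (hasDerivAt_id s).const_mul (a / 2)
      exact h1.exp
    exact (((hgd s hs).sub_const K).mul he)
  -- φ' ≤ 0 on [0, ∞)
  have hφ'le : ∀ s : ℝ, 0 ≤ s →
      (fderiv ℝ V (etaFun n v r x s)) (etaDer n f v r x s) * Real.exp (a / 2 * s)
        + (g s - K) * (Real.exp (a / 2 * s) * (a / 2)) ≤ 0 := by
    intro s hs
    have hd := lyap_deriv_bound n hn f V W l1 l2 l3 l4 c1 c2 hA1 v M hM hvM r hr x s hs
    have hKa : a / 2 * K = Cd := by
      rw [hK]; field_simp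
    have hsum : (fderiv ℝ V (etaFun n v r x s)) (etaDer n f v r x s) + a / 2 * (g s - K) ≤ 0 := by
      have : (fderiv ℝ V (etaFun n v r x s)) (etaDer n f v r x s) ≤ -(a / 2) * g s + Cd := hd
      have hexp : a / 2 * (g s - K) = a / 2 * g s - Cd := by rw [mul_sub, hKa]
      linarith
    have hE : 0 < Real.exp (a / 2 * s) := Real.exp_pos _
    calc (fderiv ℝ V (etaFun n v r x s)) (etaDer n f v r x s) * Real.exp (a / 2 * s)
        + (g s - K) * (Real.exp (a / 2 * s) * (a / 2))
        = ((fderiv ℝ V (etaFun n v r x s)) (etaDer n f v r x s) + a / 2 * (g s - K))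
            * Real.exp (a / 2 * s) := by ring
      _ ≤ 0 := mul_nonpos_of_nonpos_of_nonneg hsum hE.le
  -- φ antitone on [0, t]
  have hanti : AntitoneOn φ (Set.Icc 0 t) := by
    apply antitoneOn_of_deriv_nonpos (convex_Icc 0 t)
    · intro s hs
      exact (hφd s hs.1).continuousAt.continuousWithinAt
    · intro s hs
      rw [interior_Icc] at hs
      exact ((hφd s hs.1.le).differentiableAt).differentiableWithinAt
    · intro s hs
      rw [interior_Icc] at hs
      rw [(hφd s hs.1.le).deriv]
      exact hφ'le s hs.1.le
  have hφt : φ t ≤ φ 0 := by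
    rcases eq_or_lt_of_le ht with h | h
    · rw [← h]
    · exact hanti (Set.left_mem_Icc.2 ht) (Set.right_mem_Icc.2 ht) ht
  have hφ0 : φ 0 = g 0 - K := by
    rw [hφ]; simp
  -- bound on g 0
  have hg0 : g 0 ≤ G0 := by
    have hnorm : ‖etaFun n v r x 0‖ ≤ ‖x0‖ + M := by
      have hdec : etaFun n v r x 0 =
          ((WithLp.equiv 2 (Fin n → ℝ)).symm fun j : Fin n => x0 j / r ^ (j : ℕ))
            + EuclideanSpace.single (⟨0, hn⟩ : Fin n) (-(v 0)) := by
        ext i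
        have happ : (((WithLp.equiv 2 (Fin n → ℝ)).symm fun j : Fin n => x0 j / r ^ (j : ℕ))
            + EuclideanSpace.single (⟨0, hn⟩ : Fin n) (-(v 0))) i
            = x0 i / r ^ (i : ℕ) + (if i = (⟨0, hn⟩ : Fin n) then -(v 0) else 0) := by
          have hadd : (((WithLp.equiv 2 (Fin n → ℝ)).symm fun j : Fin n => x0 j / r ^ (j : ℕ))
              + EuclideanSpace.single (⟨0, hn⟩ : Fin n) (-(v 0))) i
              = ((WithLp.equiv 2 (Fin n → ℝ)).symm fun j : Fin n => x0 j / r ^ (j : ℕ)) i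
                + EuclideanSpace.single (⟨0, hn⟩ : Fin n) (-(v 0)) i := rfl
          rw [hadd, WithLp.equiv_symm_apply, PiLp.toLp_apply, EuclideanSpace.single_apply]
        rw [happ, etaFun_apply, hx0]
        by_cases hi : (i : ℕ) = 0
        · have hi' : i = (⟨0, hn⟩ : Fin n) := Fin.ext hi
          rw [if_pos hi, if_pos hi', hi, pow_zero]
          ring
        · have hi' : ¬ i = (⟨0, hn⟩ : Fin n) := fun hh => hi (by rw [hh])
          rw [if_neg hi, if_neg hi', sub_zero, add_zero]
      rw [hdec]
      calc ‖((WithLp.equiv 2 (Fin n → ℝ)).symm fun j : Fin n => x0 j / r ^ (j : ℕ))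
            + EuclideanSpace.single (⟨0, hn⟩ : Fin n) (-(v 0))‖
          ≤ ‖((WithLp.equiv 2 (Fin n → ℝ)).symm fun j : Fin n => x0 j / r ^ (j : ℕ))‖
            + ‖EuclideanSpace.single (⟨0, hn⟩ : Fin n) (-(v 0))‖ := norm_add_le _ _
        _ ≤ ‖x0‖ + M := by
            apply add_le_add
            · apply euclid_norm_le'
              intro i
              have hpow : (1:ℝ) ≤ r ^ (i : ℕ) := one_le_pow₀ hr
              have : |((WithLp.equiv 2 (Fin n → ℝ)).symm fun j : Fin n => x0 j / r ^ (j : ℕ)) i|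
                  = |x0 i| / r ^ (i : ℕ) := by
                rw [WithLp.equiv_symm_apply, PiLp.toLp_apply, abs_div, abs_of_pos (by positivity : (0:ℝ) < r ^ (i : ℕ))]
              rw [this]
              exact div_le_self (abs_nonneg _) hpow
            · rw [EuclideanSpace.norm_single]
              rw [Real.norm_eq_abs, abs_neg]
              have := hvM 0 le_rfl
              have := abs_nonneg (deriv v 0)
              linarith
    have hVu := hA1.V_upper (etaFun n v r x 0)
    have hsq : ‖etaFun n v r x 0‖ ^ 2 ≤ (‖x0‖ + M) ^ 2 :=
      pow_le_pow_left₀ (norm_nonneg _) hnorm 2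
    have : l2 * ‖etaFun n v r x 0‖ ^ 2 ≤ l2 * (‖x0‖ + M) ^ 2 :=
      mul_le_mul_of_nonneg_left hsq hl2.le
    calc g 0 = V (etaFun n v r x 0) := rfl
      _ ≤ l2 * ‖etaFun n v r x 0‖ ^ 2 := hVu
      _ ≤ G0 := this
  -- conclude
  have hE : (0:ℝ) < Real.exp (a / 2 * t) := Real.exp_pos _
  have h5 : (g t - K) * Real.exp (a / 2 * t) ≤ G0 := by
    have := hφt
    rw [hφ0] at this
    calc (g t - K) * Real.exp (a / 2 * t) = φ t := rfl
      _ ≤ g 0 - K := this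
      _ ≤ G0 := by linarith
  have h6 : g t - K ≤ G0 / Real.exp (a / 2 * t) := (le_div_iff₀ hE).2 h5
  have : g t ≤ K + G0 / Real.exp (a / 2 * t) := by linarith
  exact this


set_option maxHeartbeats 1600000 in
/-- under the setting of STATEMENT 8, the first state of the
noise-free tracking differentiator converges to the input signal uniformly on
`[T,∞)` as `r → ∞` within `R₀`: for every `ε > 0` there is `r* ≥ 1` such that
`sup_{t ≥ T} |x₁ʳ(t) − v(t)| ≤ ε` whenever `r ∈ R₀` and `r ≥ r*`. -/
theorem td_uniform_convergence_first_state
    (n : ℕ) (hn : 1 ≤ n)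
    (f V W : EuclideanSpace ℝ (Fin n) → ℝ) (l1 l2 l3 l4 c1 c2 : ℝ)
    (hA1 : AssumptionA1 n f V W l1 l2 l3 l4 c1 c2)
    (v : ℝ → ℝ) (hv : ContDiff ℝ 1 v) (M : ℝ) (hM : 0 < M)
    (hvM : ∀ t : ℝ, 0 ≤ t → |v t| + |deriv v t| ≤ M)
    (θ : ℝ) (hθ : θ ∈ Set.Ioo (0 : ℝ) 1)
    (x0 : EuclideanSpace ℝ (Fin n)) (T : ℝ) (hT : 0 < T)
    (X : ℝ → ℝ → EuclideanSpace ℝ (Fin n))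
    (hX : ∀ r : ℝ, (1 ≤ r ∧ 1 / r + 1 / (2 * r ^ (2 * n - 1)) ≤ θ * l3 / l2) →
      X r 0 = x0 ∧ ∀ t : ℝ, 0 ≤ t → HasDerivAt (X r) (tdField n f v r t (X r t)) t) :
    ∀ ε : ℝ, 0 < ε → ∃ rstar : ℝ, 1 ≤ rstar ∧
      ∀ r : ℝ, (1 ≤ r ∧ 1 / r + 1 / (2 * r ^ (2 * n - 1)) ≤ θ * l3 / l2) → rstar ≤ r →
        ∀ t : ℝ, T ≤ t → |X r t ⟨0, hn⟩ - v t| ≤ ε := by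
  intro ε hε
  have hl1 := hA1.l1_pos
  have hl2 := hA1.l2_pos
  have hl3 := hA1.l3_pos
  set G0 := l2 * (‖x0‖ + M) ^ 2 with hG0
  have hG00 : 0 ≤ G0 := by positivity
  set K1 := 2 * c1 ^ 2 * M ^ 2 / l1 with hK1
  have hK10 : 0 ≤ K1 := by
    have := hA1.c1_pos
    positivity
  set K2 := 2 * G0 / T with hK2
  have hK20 : 0 ≤ K2 := by positivity
  have hl1e : 0 < l1 * ε ^ 2 := by positivity
  set amin := max 1 ((K1 + K2) / (l1 * ε ^ 2)) with hamin
  have hamin1 : (1:ℝ) ≤ amin := le_max_left _ _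
  refine ⟨max 1 (l2 * amin / l3), le_max_left _ _, ?_⟩
  intro r hrR hrstar t htT
  obtain ⟨hx0, hxd⟩ := hX r hrR
  have hr1 : 1 ≤ r := hrR.1
  have hr0 : (0:ℝ) < r := lt_of_lt_of_le one_pos hr1
  have ht0 : 0 ≤ t := le_trans hT.le htT
  set a := r * l3 / l2 with ha
  have ha0 : 0 < a := by positivity
  have haamin : amin ≤ a := by
    have h1 : l2 * amin / l3 ≤ r := le_trans (le_max_right _ _) hrstar
    rw [ha, le_div_iff₀ hl2]
    have h2 : l2 * amin / l3 * l3 ≤ r * l3 := mul_le_mul_of_nonneg_right h1 hl3.le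
    have h3 : l2 * amin / l3 * l3 = amin * l2 := by field_simp
    linarith
  have ha1 : 1 ≤ a := le_trans hamin1 haamin
  -- the key bound
  have hkey := key_bound n hn f V W l1 l2 l3 l4 c1 c2 hA1 v hv M hM hvM x0 r hr1 (X r) hx0 hxd t ht0
  rw [← ha] at hkey
  -- simplify first term
  have hterm1 : 2 * (c1 ^ 2 * M ^ 2 / (a * l1)) / a = K1 / a ^ 2 := by
    rw [hK1]; field_simp
  -- bound exponential term
  have hET : a / 2 * T ≤ Real.exp (a / 2 * t) := by
    have h1 : a / 2 * T ≤ a / 2 * t := mul_le_mul_of_nonneg_left htT (by positivity)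
    have h2 : a / 2 * t ≤ Real.exp (a / 2 * t) := by
      have := Real.add_one_le_exp (a / 2 * t)
      linarith
    linarith
  have haT : 0 < a / 2 * T := by positivity
  have hterm2 : G0 / Real.exp (a / 2 * t) ≤ K2 / a := by
    have h1 : G0 / Real.exp (a / 2 * t) ≤ G0 / (a / 2 * T) :=
      div_le_div_of_nonneg_left hG00 haT hET
    have h2 : G0 / (a / 2 * T) = K2 / a := by
      rw [hK2]; field_simp
    linarith
  -- first term ≤ K1 / a
  have hterm1' : K1 / a ^ 2 ≤ K1 / a := by
    apply div_le_div_of_nonneg_left hK10 ha0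
    nlinarith
  -- total bound
  have htot : V (etaFun n v r (X r) t) ≤ (K1 + K2) / a := by
    have : K1 / a + K2 / a = (K1 + K2) / a := by ring
    linarith [hkey, hterm1 ▸ hterm1']
  have hfin : (K1 + K2) / a ≤ l1 * ε ^ 2 := by
    rw [div_le_iff₀ ha0]
    have h1 : (K1 + K2) / (l1 * ε ^ 2) ≤ amin := le_max_right _ _
    have h2 : K1 + K2 ≤ amin * (l1 * ε ^ 2) := (div_le_iff₀ hl1e).1 h1
    have h3 : amin * (l1 * ε ^ 2) ≤ a * (l1 * ε ^ 2) :=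
      mul_le_mul_of_nonneg_right haamin hl1e.le
    nlinarith
  -- conclude
  set η := etaFun n v r (X r) t with hη
  have hVl : l1 * ‖η‖ ^ 2 ≤ V η := hA1.V_lower η
  have hsq : ‖η‖ ^ 2 ≤ ε ^ 2 := by nlinarith
  have hnormle : ‖η‖ ≤ ε := by nlinarith [norm_nonneg η]
  have hcoord : η ⟨0, hn⟩ = X r t ⟨0, hn⟩ - v t := by
    rw [hη, etaFun_apply]
    rw [if_pos (rfl : (((⟨0, hn⟩ : Fin n) : ℕ)) = 0)]
    have hp : r ^ (((⟨0, hn⟩ : Fin n) : ℕ)) = 1 := pow_zero r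
    rw [hp, div_one]
  rw [← hcoord]
  exact le_trans (euclid_coord_le' η ⟨0, hn⟩) hnormle
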